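/- arXiv:nlin/0309023 — 5 statements merged into one kernel-verified Lean document; each statement's English description precedes it below -/
import Mathlib

section
/- Let u be a smooth solution of the CDIS equation u_t = u_{xxx} + 3u²u_{xx} + 9u u_x² + 3u⁴ u_x. Then the two defining relations for the nonlocal variable ω, namely ω_x = u² and ω_t = 2u u_{xx} + 6u³ u_x + u⁶ − u_x², are compatible: ∂_t(u²) = ∂_x(2u u_{xx} + 6u³ u_x + u⁶ − u_x²). -/
/-- Partial derivative in the first (space) variable. -/
noncomputable def dx (u : ℝ → ℝ → ℝ) : ℝ → ℝ → ℝ := fun x t => deriv (fun y => u y t) x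

/-- Partial derivative in the second (time) variable. -/
noncomputable def dt (u : ℝ → ℝ → ℝ) : ℝ → ℝ → ℝ := fun x t => deriv (fun s => u x s) t

lemma contDiff_dx_aux (u : ℝ → ℝ → ℝ) (hu : ContDiff ℝ (⊤ : ℕ∞) (Function.uncurry u)) :
    ContDiff ℝ (⊤ : ℕ∞) (Function.uncurry (dx u)) := by
  have h : Function.uncurry (dx u)
      = fun p : ℝ × ℝ => fderiv ℝ (Function.uncurry u) p (1, 0) := by
    funext p
    have h1 : HasDerivAt (fun y => u y p.2) (fderiv ℝ (Function.uncurry u) p (1, 0)) p.1 := by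
      have := ((hu.differentiable (by simp) (p.1, p.2)).hasFDerivAt).comp_hasDerivAt p.1
        (HasDerivAt.prodMk (hasDerivAt_id p.1) (hasDerivAt_const p.1 p.2))
      exact this
    simpa [Function.uncurry, dx] using h1.deriv
  rw [h]
  exact (hu.fderiv_right (by simp)).clm_apply contDiff_const

lemma hasDerivAt_slice_x (u : ℝ → ℝ → ℝ) (hu : ContDiff ℝ (⊤ : ℕ∞) (Function.uncurry u)) (x t : ℝ) :
    HasDerivAt (fun y => u y t) (dx u x t) x := by
  have hdiff : DifferentiableAt ℝ (fun y => u y t) x := by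
    have h : (fun y => u y t) = Function.uncurry u ∘ fun y => (y, t) := rfl
    rw [h]
    exact (hu.differentiable (by simp) (x, t)).comp x
      (DifferentiableAt.prodMk differentiableAt_id (differentiableAt_const t))
  exact hdiff.hasDerivAt

lemma hasDerivAt_slice_t (u : ℝ → ℝ → ℝ) (hu : ContDiff ℝ (⊤ : ℕ∞) (Function.uncurry u)) (x t : ℝ) :
    HasDerivAt (fun s => u x s) (dt u x t) t := by
  have hdiff : DifferentiableAt ℝ (fun s => u x s) t := by
    have h : (fun s => u x s) = Function.uncurry u ∘ fun s => (x, s) := rfl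
    rw [h]
    exact (hu.differentiable (by simp) (x, t)).comp t
      (DifferentiableAt.prodMk (differentiableAt_const x) differentiableAt_id)
  exact hdiff.hasDerivAt

/-- for a smooth solution of the CDIS equation, the defining relations
for the nonlocal variable ω are compatible: ∂_t(u²) = ∂_x(2uu_{xx} + 6u³u_x + u⁶ − u_x²). -/
theorem cdis_conservation_law (u : ℝ → ℝ → ℝ)
    (hu : ContDiff ℝ (⊤ : ℕ∞) (Function.uncurry u))
    (hcdis : ∀ x t, dt u x t =
      dx (dx (dx u)) x t + 3 * (u x t) ^ 2 * dx (dx u) x t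
        + 9 * u x t * (dx u x t) ^ 2 + 3 * (u x t) ^ 4 * dx u x t) :
    ∀ x t,
      dt (fun x t => (u x t) ^ 2) x t =
      dx (fun x t => 2 * u x t * dx (dx u) x t + 6 * (u x t) ^ 3 * dx u x t
            + (u x t) ^ 6 - (dx u x t) ^ 2) x t := by
  intro x t
  have hu1 : ContDiff ℝ (⊤ : ℕ∞) (Function.uncurry (dx u)) := contDiff_dx_aux u hu
  have hu2 : ContDiff ℝ (⊤ : ℕ∞) (Function.uncurry (dx (dx u))) := contDiff_dx_aux _ hu1
  have H0 := hasDerivAt_slice_x u hu x t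
  have H1 := hasDerivAt_slice_x _ hu1 x t
  have H2 := hasDerivAt_slice_x _ hu2 x t
  have Ht := hasDerivAt_slice_t u hu x t
  have L : dt (fun x t => (u x t) ^ 2) x t = 2 * u x t * dt u x t := by
    show deriv (fun s => (u x s) ^ 2) t = _
    rw [(Ht.fun_pow 2).deriv]
    ring
  have Hrhs : HasDerivAt
      (fun y => 2 * u y t * dx (dx u) y t + 6 * (u y t) ^ 3 * dx u y t
        + (u y t) ^ 6 - (dx u y t) ^ 2)
      ((2 * dx u x t * dx (dx u) x t + 2 * u x t * dx (dx (dx u)) x t)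
        + (6 * ((3 : ℕ) * (u x t) ^ 2 * dx u x t) * dx u x t
            + 6 * (u x t) ^ 3 * dx (dx u) x t)
        + ((6 : ℕ) * (u x t) ^ 5 * dx u x t)
        - ((2 : ℕ) * (dx u x t) ^ 1 * dx (dx u) x t)) x := by
    have t1 : HasDerivAt (fun y => 2 * u y t * dx (dx u) y t)
        (2 * dx u x t * dx (dx u) x t + 2 * u x t * dx (dx (dx u)) x t) x := by
      simpa [mul_comm, mul_assoc, mul_left_comm] using (H0.const_mul 2).fun_mul H2
    have t2 : HasDerivAt (fun y => 6 * (u y t) ^ 3 * dx u y t)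
        (6 * ((3 : ℕ) * (u x t) ^ 2 * dx u x t) * dx u x t
          + 6 * (u x t) ^ 3 * dx (dx u) x t) x := by
      simpa using ((H0.fun_pow 3).const_mul 6).fun_mul H1
    have t3 : HasDerivAt (fun y => (u y t) ^ 6) ((6 : ℕ) * (u x t) ^ 5 * dx u x t) x := by
      simpa using H0.fun_pow 6
    have t4 : HasDerivAt (fun y => (dx u y t) ^ 2)
        ((2 : ℕ) * (dx u x t) ^ 1 * dx (dx u) x t) x := H1.pow 2
    exact ((t1.add t2).add t3).sub t4
  have R := Hrhs.deriv
  rw [L]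
  show 2 * u x t * dt u x t = deriv (fun y => 2 * u y t * dx (dx u) y t
      + 6 * (u y t) ^ 3 * dx u y t + (u y t) ^ 6 - (dx u y t) ^ 2) x
  rw [R, hcdis x t]
  push_cast
  ring
end

section
/- If u(x,t) is a smooth solution of the CDIS equation u_t = u_{xxx} + 3u²u_{xx} + 9u u_x² + 3u⁴u_x and ω(x,t) satisfies ω_x = u² and ω_t = 2u u_{xx} + 6u³u_x + u⁶ − u_x², then v = exp(ω) u satisfies the linear equation v_t = v_{xxx}. -/
private lemma diffx {f : ℝ → ℝ → ℝ} (hf : ContDiff ℝ (⊤ : ℕ∞) (Function.uncurry f)) (x t : ℝ) :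
    DifferentiableAt ℝ (fun y => f y t) x := by
  have h : (fun y => f y t) = Function.uncurry f ∘ (fun y : ℝ => (y, t)) := rfl
  rw [h]
  exact (hf.differentiable (by simp) (x, t)).comp x
    (differentiableAt_id.prodMk (differentiableAt_const t))

private lemma difft {f : ℝ → ℝ → ℝ} (hf : ContDiff ℝ (⊤ : ℕ∞) (Function.uncurry f)) (x t : ℝ) :
    DifferentiableAt ℝ (fun s => f x s) t := by
  have h : (fun s => f x s) = Function.uncurry f ∘ (fun s : ℝ => (x, s)) := rfl
  rw [h]
  exact (hf.differentiable (by simp) (x, t)).comp t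
    ((differentiableAt_const x).prodMk differentiableAt_id)

private lemma dx_eq_fderiv {f : ℝ → ℝ → ℝ} (hf : ContDiff ℝ (⊤ : ℕ∞) (Function.uncurry f)) (x t : ℝ) :
    dx f x t = fderiv ℝ (Function.uncurry f) (x, t) (1, 0) := by
  have h1 : HasFDerivAt (fun y : ℝ => (y, t)) ((ContinuousLinearMap.id ℝ ℝ).prod 0) x :=
    (hasFDerivAt_id x).prodMk (hasFDerivAt_const t x)
  have h2 := (hf.differentiable (by simp) (x, t)).hasFDerivAt
  have h3 := (h2.comp x h1).hasDerivAt
  have h4 : HasDerivAt (fun y => f y t) (fderiv ℝ (Function.uncurry f) (x, t) (1, 0)) x := by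
    exact h3.congr_deriv (by simp)
  exact h4.deriv

private lemma contDiff_dx {f : ℝ → ℝ → ℝ} (hf : ContDiff ℝ (⊤ : ℕ∞) (Function.uncurry f)) :
    ContDiff ℝ (⊤ : ℕ∞) (Function.uncurry (dx f)) := by
  have h : Function.uncurry (dx f) = fun p : ℝ × ℝ => fderiv ℝ (Function.uncurry f) p (1, 0) := by
    funext p
    exact dx_eq_fderiv hf p.1 p.2
  rw [h]
  exact (hf.fderiv_right (by simp)).clm_apply contDiff_const

/-- if u is a smooth solution of the CDIS equation and ω satisfies
ω_x = u², ω_t = 2uu_{xx} + 6u³u_x + u⁶ − u_x², then v = exp(ω)u solves v_t = v_{xxx}. -/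
theorem cdis_linearization (u ω : ℝ → ℝ → ℝ)
    (hu : ContDiff ℝ (⊤ : ℕ∞) (Function.uncurry u))
    (hω : ContDiff ℝ (⊤ : ℕ∞) (Function.uncurry ω))
    (hcdis : ∀ x t, dt u x t =
      dx (dx (dx u)) x t + 3 * (u x t) ^ 2 * dx (dx u) x t
        + 9 * u x t * (dx u x t) ^ 2 + 3 * (u x t) ^ 4 * dx u x t)
    (hωx : ∀ x t, dx ω x t = (u x t) ^ 2)
    (hωt : ∀ x t, dt ω x t = 2 * u x t * dx (dx u) x t + 6 * (u x t) ^ 3 * dx u x t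
        + (u x t) ^ 6 - (dx u x t) ^ 2) :
    ∀ x t,
      dt (fun x t => Real.exp (ω x t) * u x t) x t =
      dx (dx (dx (fun x t => Real.exp (ω x t) * u x t))) x t := by
  have hux : ContDiff ℝ (⊤ : ℕ∞) (Function.uncurry (dx u)) := contDiff_dx hu
  have huxx : ContDiff ℝ (⊤ : ℕ∞) (Function.uncurry (dx (dx u))) := contDiff_dx hux
  -- basic HasDerivAt facts (in x)
  have Hu : ∀ x t, HasDerivAt (fun y => u y t) (dx u x t) x :=
    fun x t => (diffx hu x t).hasDerivAt
  have Hux : ∀ x t, HasDerivAt (fun y => dx u y t) (dx (dx u) x t) x :=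
    fun x t => (diffx hux x t).hasDerivAt
  have Huxx : ∀ x t, HasDerivAt (fun y => dx (dx u) y t) (dx (dx (dx u)) x t) x :=
    fun x t => (diffx huxx x t).hasDerivAt
  -- derivative of exp(ω) in x
  have Hexp : ∀ x t, HasDerivAt (fun y => Real.exp (ω y t))
      (Real.exp (ω x t) * (u x t) ^ 2) x := by
    intro x t
    have h0 : HasDerivAt (fun y => ω y t) (dx ω x t) x := (diffx hω x t).hasDerivAt
    rw [hωx] at h0
    exact h0.exp
  -- first x derivative of v
  have hv1 : ∀ x t, dx (fun x t => Real.exp (ω x t) * u x t) x t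
      = Real.exp (ω x t) * ((u x t) ^ 3 + dx u x t) := by
    intro x t
    have h : HasDerivAt (fun y => Real.exp (ω y t) * u y t)
        (Real.exp (ω x t) * ((u x t) ^ 3 + dx u x t)) x := by
      have := (Hexp x t).mul (Hu x t)
      exact this.congr_deriv (by ring)
    exact h.deriv
  -- second x derivative of v
  have hv2 : ∀ x t, dx (dx (fun x t => Real.exp (ω x t) * u x t)) x t
      = Real.exp (ω x t) * ((u x t) ^ 5 + 4 * (u x t) ^ 2 * dx u x t + dx (dx u) x t) := by
    intro x t
    have hF : HasDerivAt (fun y => (u y t) ^ 3 + dx u y t)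
        (3 * (u x t) ^ 2 * dx u x t + dx (dx u) x t) x := by
      have := ((Hu x t).pow 3).add (Hux x t)
      exact this.congr_deriv (by norm_num)
    have h := (Hexp x t).mul hF
    have heq : (fun y => dx (fun x t => Real.exp (ω x t) * u x t) y t)
        = (fun y => Real.exp (ω y t) * ((u y t) ^ 3 + dx u y t)) :=
      funext fun y => hv1 y t
    show deriv (fun y => dx (fun x t => Real.exp (ω x t) * u x t) y t) x = _
    rw [heq]
    exact h.deriv.trans (by ring)
  -- third x derivative of v
  have hv3 : ∀ x t, dx (dx (dx (fun x t => Real.exp (ω x t) * u x t))) x t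
      = Real.exp (ω x t) * ((u x t) ^ 7 + 9 * (u x t) ^ 4 * dx u x t
          + 5 * (u x t) ^ 2 * dx (dx u) x t + 8 * u x t * (dx u x t) ^ 2
          + dx (dx (dx u)) x t) := by
    intro x t
    have hG : HasDerivAt
        (fun y => (u y t) ^ 5 + 4 * (u y t) ^ 2 * dx u y t + dx (dx u) y t)
        (5 * (u x t) ^ 4 * dx u x t + 8 * u x t * (dx u x t) ^ 2
          + 4 * (u x t) ^ 2 * dx (dx u) x t + dx (dx (dx u)) x t) x := by
      have h1 := (Hu x t).pow 5
      have h2 := (((Hu x t).pow 2).const_mul (4:ℝ)).mul (Hux x t)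
      have := (h1.add h2).add (Huxx x t)
      refine this.congr_deriv ?_
      norm_num only [Pi.pow_apply]
      ring
    have h := (Hexp x t).mul hG
    have heq : (fun y => dx (dx (fun x t => Real.exp (ω x t) * u x t)) y t)
        = (fun y => Real.exp (ω y t)
            * ((u y t) ^ 5 + 4 * (u y t) ^ 2 * dx u y t + dx (dx u) y t)) :=
      funext fun y => hv2 y t
    show deriv (fun y => dx (dx (fun x t => Real.exp (ω x t) * u x t)) y t) x = _
    rw [heq]
    exact h.deriv.trans (by ring)
  -- time derivative of v
  intro x t
  have h0t : HasDerivAt (fun s => ω x s) (dt ω x t) t := (difft hω x t).hasDerivAt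
  have hut : HasDerivAt (fun s => u x s) (dt u x t) t := (difft hu x t).hasDerivAt
  have hdt : dt (fun x t => Real.exp (ω x t) * u x t) x t
      = Real.exp (ω x t) * dt ω x t * u x t + Real.exp (ω x t) * dt u x t :=
    ((h0t.exp).mul hut).deriv
  rw [hdt, hv3, hωt, hcdis]
  ring
end

section
/- Define an abstract Lie algebra over ℝ with basis {τ_{m,j} : m,j ≥ 0} and bracket [τ_{m,j}, τ_{m',j'}] = ((2j'+1)m − (2j+1)m') τ_{m+m'−1, j+j'} (interpreted as 0 when m + m' = 0 since then the coefficient vanishes). Then this bracket satisfies the Jacobi identity, so it indeed defines a Lie algebra. -/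
/-- The basis element τ_{m,j} of the free ℝ-vector space on symbols τ_{m,j}, m, j ∈ ℕ. -/
noncomputable def tau (m j : ℕ) : (ℕ × ℕ) →₀ ℝ := Finsupp.single (m, j) 1

/-- The bilinear bracket determined by the structure constants
[τ_{m,j}, τ_{m',j'}] = ((2j'+1)m − (2j+1)m') τ_{m+m'−1, j+j'}
(the coefficient vanishes when m = m' = 0, so no τ_{−1,·} is needed;
the natural subtraction m+m'−1 is harmless there). -/
noncomputable def br (f g : (ℕ × ℕ) →₀ ℝ) : (ℕ × ℕ) →₀ ℝ :=
  f.sum fun p a => g.sum fun q b =>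
    (a * b * ((2 * (q.2 : ℝ) + 1) * (p.1 : ℝ) - (2 * (p.2 : ℝ) + 1) * (q.1 : ℝ))) •
      Finsupp.single (p.1 + q.1 - 1, p.2 + q.2) (1 : ℝ)

/-!
The bracket is biadditive, so antisymmetry and the Jacobi identity only need to be checked on
basis vectors. There all three terms of the Jacobiator of τ_p, τ_q, τ_r sit at the same index
(p.1 + q.1 + r.1 - 2, p.2 + q.2 + r.2), and their coefficients cancel by a polynomial identity.
(Conceptually, τ_{m,j} ↦ x^m y^(2j+1) embeds the algebra into polynomials under the Poisson
bracket ∂ₓf ∂ᵧg - ∂ᵧf ∂ₓg.)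
-/

open Finsupp

noncomputable def brCoeff (p q : ℕ × ℕ) : ℝ :=
  (2 * (q.2 : ℝ) + 1) * p.1 - (2 * (p.2 : ℝ) + 1) * q.1

lemma brCoeff_eq_zero_of_fst_add_eq_zero {p q : ℕ × ℕ} (h : p.1 + q.1 = 0) : brCoeff p q = 0 := by
  simp [brCoeff, Nat.eq_zero_of_add_eq_zero_right h, Nat.eq_zero_of_add_eq_zero_left h]

lemma brCoeff_swap (p q : ℕ × ℕ) : brCoeff q p = -brCoeff p q := by
  unfold brCoeff; ring

lemma br_zero_left (g : (ℕ × ℕ) →₀ ℝ) : br 0 g = 0 := by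
  simp [br]

lemma br_zero_right (f : (ℕ × ℕ) →₀ ℝ) : br f 0 = 0 := by
  simp [br]

lemma br_add_left (f f' g : (ℕ × ℕ) →₀ ℝ) : br (f + f') g = br f g + br f' g := by
  unfold br
  refine sum_add_index' (fun _ => by simp) fun _ a a' => ?_
  rw [← sum_add]
  congr 1; funext q b
  rw [← add_smul]; congr 1; ring

lemma br_add_right (f g g' : (ℕ × ℕ) →₀ ℝ) : br f (g + g') = br f g + br f g' := by
  unfold br
  rw [← sum_add]
  congr 1; funext p a
  refine sum_add_index' (fun _ => by simp) fun _ b b' => ?_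
  rw [← add_smul]; congr 1; ring

lemma br_single_single (p q : ℕ × ℕ) (a b : ℝ) :
    br (single p a) (single q b) = single (p.1 + q.1 - 1, p.2 + q.2) (a * b * brCoeff p q) := by
  simp [br, brCoeff, smul_single]

lemma br_single_br_single_single (p q r : ℕ × ℕ) (a b c : ℝ) :
    br (single p a) (br (single q b) (single r c)) =
      single (p + q + r - (2, 0)) (a * b * c * brCoeff q r *
        ((2 * ((q.2 + r.2 : ℕ) : ℝ) + 1) * p.1 - (2 * (p.2 : ℝ) + 1) * (q.1 + r.1 - 1))) := by
  rw [br_single_single, br_single_single]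
  -- Either the inner coefficient vanishes, or the truncated subtraction `q.1 + r.1 - 1` is exact.
  rcases Nat.eq_zero_or_pos (q.1 + r.1) with h | h
  · simp [brCoeff_eq_zero_of_fst_add_eq_zero h]
  · congr 1
    · ext <;> simp <;> omega
    · simp only [brCoeff]
      push_cast [Nat.cast_sub (Nat.one_le_iff_ne_zero.mpr h.ne')]
      ring

theorem br_anticomm (f g : (ℕ × ℕ) →₀ ℝ) : br f g = -br g f := by
  induction f using Finsupp.induction_linear with
  | zero => simp [br_zero_left, br_zero_right]
  | add f f' hf hf' => rw [br_add_left, br_add_right, hf, hf', neg_add]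
  | single p a =>
    induction g using Finsupp.induction_linear with
    | zero => simp [br_zero_left, br_zero_right]
    | add g g' hg hg' => rw [br_add_left, br_add_right, hg, hg', neg_add]
    | single q b =>
      rw [br_single_single, br_single_single, brCoeff_swap, ← single_neg]
      congr 1
      · ext <;> simp <;> omega
      · ring

noncomputable def jacobiator (f g h : (ℕ × ℕ) →₀ ℝ) : (ℕ × ℕ) →₀ ℝ :=
  br f (br g h) + br g (br h f) + br h (br f g)

lemma jacobiator_cycle (f g h : (ℕ × ℕ) →₀ ℝ) : jacobiator f g h = jacobiator g h f := by
  unfold jacobiator; abel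

lemma jacobiator_add_left (f f' g h : (ℕ × ℕ) →₀ ℝ) :
    jacobiator (f + f') g h = jacobiator f g h + jacobiator f' g h := by
  simp only [jacobiator, br_add_left, br_add_right]
  abel

lemma jacobiator_single (p q r : ℕ × ℕ) (a b c : ℝ) :
    jacobiator (single p a) (single q b) (single r c) = 0 := by
  rw [jacobiator, br_single_br_single_single, br_single_br_single_single,
    br_single_br_single_single, show q + r + p = p + q + r by abel,
    show r + p + q = p + q + r by abel, ← single_add, ← single_add, single_eq_zero]
  simp only [brCoeff]
  push_cast
  ring

lemma jacobiator_eq_zero_of_single_left {g h : (ℕ × ℕ) →₀ ℝ}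
    (hsingle : ∀ p a, jacobiator (single p a) g h = 0) (f : (ℕ × ℕ) →₀ ℝ) :
    jacobiator f g h = 0 := by
  induction f using Finsupp.induction_linear with
  | zero => simp [jacobiator, br_zero_left, br_zero_right]
  | add f f' hf hf' => rw [jacobiator_add_left, hf, hf', add_zero]
  | single p a => exact hsingle p a

theorem jacobiator_eq_zero (f g h : (ℕ × ℕ) →₀ ℝ) : jacobiator f g h = 0 := by
  refine jacobiator_eq_zero_of_single_left (fun p a => ?_) f
  rw [jacobiator_cycle]
  refine jacobiator_eq_zero_of_single_left (fun q b => ?_) g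
  rw [jacobiator_cycle]
  refine jacobiator_eq_zero_of_single_left (fun r c => ?_) h
  rw [jacobiator_cycle]
  exact jacobiator_single p q r a b c

/-- the bracket is antisymmetric and satisfies the Jacobi identity,
so it defines a Lie algebra structure on the free vector space on the τ_{m,j}. -/
theorem br_lie_algebra :
    (∀ f g : (ℕ × ℕ) →₀ ℝ, br f g = -br g f) ∧
    (∀ f g h : (ℕ × ℕ) →₀ ℝ, br f (br g h) + br g (br h f) + br h (br f g) = 0) :=
  ⟨br_anticomm, jacobiator_eq_zero⟩
end

section
/- In the Lie algebra with basis τ_{m,j} and bracket [τ_{m,j}, τ_{m',j'}] = ((2j'+1)m − (2j+1)m')τ_{m+m'−1,j+j'}, define for a fixed k ≥ 0 and real t the elements G_{m,j}(t) = Σ_{i=0}^{m} ((2k+1)t)^i m!/(i!(m−i)!) τ_{m−i, j+ik}. Then G_{m,j}(t) = exp(−t ad_{τ_{0,k}})(τ_{m,j}), where the exponential series terminates by nilpotency of ad_{τ_{0,k}} on τ_{m,j}. -/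
/-- The elements G_{m,j}(t) = Σ_{i=0}^{m} ((2k+1)t)^i m!/(i!(m−i)!) τ_{m−i, j+ik}. -/
noncomputable def Gelt (k : ℕ) (m j : ℕ) (t : ℝ) : (ℕ × ℕ) →₀ ℝ :=
  ∑ i ∈ Finset.range (m + 1),
    (((2 * (k : ℝ) + 1) * t) ^ i *
      ((m.factorial : ℝ) / ((i.factorial : ℝ) * ((m - i).factorial : ℝ)))) • tau (m - i) (j + i * k)


lemma br_smul_tau (k m' j' : ℕ) (c : ℝ) :
    br (tau 0 k) (c • tau m' j') =
      (c * (-((2 * (k : ℝ) + 1) * (m' : ℝ)))) • tau (m' - 1) (j' + k) := by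
  unfold br tau
  rw [Finsupp.smul_single, smul_eq_mul, mul_one]
  rw [Finsupp.sum_single_index, Finsupp.sum_single_index]
  · simp only [Nat.cast_zero, zero_add]
    rw [Finsupp.smul_single, Finsupp.smul_single]
    rw [Nat.add_comm k j']
    congr 1
    ring
  · simp
  · simp

lemma iter_tau (k m j : ℕ) : ∀ i, i ≤ m →
    (br (tau 0 k))^[i] (tau m j) =
      ((-(2 * (k : ℝ) + 1)) ^ i * ((m.factorial : ℝ) / ((m - i).factorial : ℝ))) •
        tau (m - i) (j + i * k) := by
  intro i
  induction i with
  | zero =>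
    intro _
    simp [div_self (by exact_mod_cast m.factorial_ne_zero : (m.factorial : ℝ) ≠ 0)]
  | succ i ih =>
    intro hi
    rw [Function.iterate_succ_apply', ih (by omega), br_smul_tau]
    have h1 : m - i - 1 = m - (i + 1) := by omega
    have h2 : j + i * k + k = j + (i + 1) * k := by ring
    rw [h1, h2]
    congr 1
    have h3 : (m - i).factorial = (m - i) * (m - i - 1).factorial := by
      rw [← Nat.succ_pred_eq_of_pos (by omega : 0 < m - i)]
      simp [Nat.factorial_succ]
    rw [h1] at h3
    rw [h3]
    have h4 : ((m - i : ℕ) : ℝ) ≠ 0 := by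
      have : 0 < m - i := by omega
      exact_mod_cast this.ne'
    have h5 : ((m - (i+1)).factorial : ℝ) ≠ 0 := by exact_mod_cast (m - (i+1)).factorial_ne_zero
    push_cast
    field_simp
    ring

/-- G_{m,j}(t) = exp(−t ad_{τ_{0,k}})(τ_{m,j}); by nilpotency of
ad_{τ_{0,k}} on τ_{m,j} the exponential series terminates after the i = m term,
so it equals the finite sum Σ_{i=0}^{m} ((−t)^i/i!) ad_{τ_{0,k}}^i(τ_{m,j}). -/
theorem Gelt_eq_exp_ad (k m j : ℕ) (t : ℝ) :
    Gelt k m j t =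
      ∑ i ∈ Finset.range (m + 1),
        ((-t) ^ i / (i.factorial : ℝ)) • (br (tau 0 k))^[i] (tau m j) := by
  unfold Gelt
  refine Finset.sum_congr rfl fun i hi => ?_
  have him : i ≤ m := by
    simpa using Finset.mem_range_succ_iff.mp hi
  rw [iter_tau k m j i him, smul_smul]
  congr 1
  have h1 : (-t) ^ i * (-(2 * (k : ℝ) + 1)) ^ i = ((2 * (k : ℝ) + 1) * t) ^ i := by
    rw [← mul_pow]
    congr 1
    ring
  have hi0 : ((i.factorial : ℝ)) ≠ 0 := by exact_mod_cast i.factorial_ne_zero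
  have hmi : (((m - i).factorial : ℝ)) ≠ 0 := by exact_mod_cast (m - i).factorial_ne_zero
  rw [← h1]
  field_simp
end

section
/- In the Lie algebra spanned by {τ_{m,j} : m,j ≥ 0} ∪ {W} with brackets [τ_{m,j}, τ_{m',j'}] = ((2j'+1)m − (2j+1)m')τ_{m+m'−1,j+j'} and [W, τ_{m,j}] = 0 for all m,j, the one-dimensional subspace spanned by W is precisely the center of the Lie algebra. -/
/-- The extended algebra spanned by {τ_{m,j}} ∪ {W}: an element is a pair
(f, c) standing for f + c·W.  Since W is central and no bracket produces W,
the bracket is [(f,a),(g,b)] = ([f,g], 0). -/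
noncomputable def brW (x y : ((ℕ × ℕ) →₀ ℝ) × ℝ) : ((ℕ × ℕ) →₀ ℝ) × ℝ :=
  (br x.1 y.1, 0)

lemma br_tau_apply (f : (ℕ × ℕ) →₀ ℝ) (j' m j : ℕ) :
    (br f (tau 1 j')) (m, j + j')
      = f (m, j) * ((2 * (j' : ℝ) + 1) * m - (2 * (j : ℝ) + 1)) := by
  rw [br, tau]
  rw [Finsupp.sum_apply]
  rw [Finsupp.sum]
  rw [Finset.sum_eq_single (m, j)]
  · simp [Finsupp.sum_single_index]
  · intro p hp hne
    rw [Finsupp.sum_single_index (by simp)]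
    simp only [Finsupp.smul_apply, Finsupp.single_apply]
    rw [if_neg, smul_zero]
    intro h
    apply hne
    obtain ⟨h1, h2⟩ := Prod.mk.injEq .. ▸ h
    exact Prod.ext (by omega) (by omega)
  · intro h
    simp [Finsupp.notMem_support_iff.mp h, Finsupp.sum_single_index]

/-- in the Lie algebra spanned by {τ_{m,j}} ∪ {W} with
[τ_{m,j}, τ_{m',j'}] = ((2j'+1)m − (2j+1)m')τ_{m+m'−1,j+j'} and [W, ·] = 0,
an element Σ c_{m,j} τ_{m,j} + cW is central iff all c_{m,j} = 0: the center
is exactly the one-dimensional subspace ℝ·W. -/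
theorem center_eq_span_W (f : (ℕ × ℕ) →₀ ℝ) (c : ℝ) :
    (∀ y : ((ℕ × ℕ) →₀ ℝ) × ℝ, brW (f, c) y = 0 ∧ brW y (f, c) = 0) ↔ f = 0 := by
  constructor
  · intro h
    have h0 : br f (tau 1 0) = 0 := congrArg Prod.fst (h (tau 1 0, 0)).1
    have h1 : br f (tau 1 1) = 0 := congrArg Prod.fst (h (tau 1 1, 0)).1
    ext ⟨m, j⟩
    have e0 := br_tau_apply f 0 m j
    have e1 := br_tau_apply f 1 m j
    rw [h0] at e0
    rw [h1] at e1
    simp only [Finsupp.coe_zero, Pi.zero_apply] at e0 e1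
    push_cast at e0 e1
    by_contra hne
    have hne' : f (m, j) ≠ 0 := hne
    have d0 := (mul_eq_zero.mp e0.symm).resolve_left hne'
    have d1 := (mul_eq_zero.mp e1.symm).resolve_left hne'
    have hm : (m : ℝ) = 0 := by linarith
    have : (j : ℝ) ≥ 0 := Nat.cast_nonneg j
    linarith
  · intro hf y
    subst hf
    constructor
    · simp [brW, br, Prod.ext_iff]
    · simp only [brW, br, Prod.ext_iff]
      refine ⟨?_, rfl⟩
      rw [Finsupp.sum]
      apply Finset.sum_eq_zero
      intro p hp
      simp [Finsupp.sum_zero_index]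
end
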